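/- arXiv:2207.11758 — 2 statements merged into one kernel-verified Lean document; each statement's English description precedes it below -/
import Mathlib

section
/- For all integers k, H, y ≥ 1, the number N_k(H; y) of integer tuples (h₁, h₂, …, h_k) ∈ ([−H, H] ∩ ℤ)^k with y | h₁h₂⋯h_k and h₁h₂⋯h_k ≠ 0 satisfies N_k(H; y) ≤ τ_k(y) · (2H)^k / y; moreover N_k(H; y) = 0 whenever y > H^k. -/
/-!
If `y ∣ h₁⋯h_k ≠ 0`, then `y = d₁⋯d_k` with `d_i ∣ h_i`. So every counted tuple lies in one of
the `τ_k(y)` boxes `∏ᵢ {x ∈ [-H, H] : d_i ∣ x, x ≠ 0}` indexed by ordered factorizations of `y`,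
and such a box has at most `∏ᵢ 2H / d_i = (2H)^k / y` points. Vanishing for `y > H^k` is because
`0 < |h₁⋯h_k| ≤ H^k`.
-/

/-- `τ_k(n)`: the number of `k`-tuples of positive integers with product `n`. -/
noncomputable def tauNat (k n : ℕ) : ℕ :=
  Nat.card {d : Fin k → ℕ // (∀ i, 0 < d i) ∧ ∏ i, d i = n}

/-- `N_k(H; y)`: the number of integer tuples `(h₁,…,h_k) ∈ ([−H,H] ∩ ℤ)^k`
with `y ∣ h₁⋯h_k` and `h₁⋯h_k ≠ 0`. -/
noncomputable def NkHy (k H y : ℕ) : ℕ :=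
  Nat.card {h : Fin k → ℤ //
    (∀ i, h i ∈ Finset.Icc (-(H : ℤ)) (H : ℤ)) ∧ (y : ℤ) ∣ ∏ i, h i ∧ (∏ i, h i) ≠ 0}

open Finset

theorem Finset.exists_prod_eq_of_dvd_prod {ι α : Type*} [CommMonoid α] [DecompositionMonoid α]
    [Subsingleton αˣ] {s : Finset ι} {f : ι → α} {a : α} (h : a ∣ ∏ i ∈ s, f i) :
    ∃ g : ι → α, ∏ i ∈ s, g i = a ∧ ∀ i ∈ s, g i ∣ f i := by
  classical
  induction s using Finset.cons_induction generalizing a with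
  | empty =>
    rw [prod_empty, ← isUnit_iff_dvd_one, isUnit_iff_eq_one] at h
    exact ⟨fun _ ↦ 1, by simp [h], by simp⟩
  | cons j s hj ih =>
    rw [prod_cons] at h
    obtain ⟨a₁, a₂, ha₁, ha₂, rfl⟩ := exists_dvd_and_dvd_of_dvd_mul h
    obtain ⟨g, hg, hgf⟩ := ih ha₂
    refine ⟨Function.update g j a₁, ?_, ?_⟩
    · rw [prod_cons, Function.update_self, prod_update_of_notMem hj, hg]
    · simp only [mem_cons, forall_eq_or_imp, Function.update_self]
      refine ⟨ha₁, fun i hi ↦ ?_⟩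
      rw [Function.update_of_ne (ne_of_mem_of_not_mem hi hj)]
      exact hgf i hi

noncomputable def nonzeroMultiples (H d : ℕ) : Finset ℤ :=
  {x ∈ Icc (-(H : ℤ)) H | (d : ℤ) ∣ x ∧ x ≠ 0}

theorem card_nonzeroMultiples_le (H d : ℕ) : #(nonzeroMultiples H d) ≤ 2 * (H / d) := by
  set A : Finset ℕ := {n ∈ Ioc 0 H | d ∣ n}
  have hsub : nonzeroMultiples H d ⊆ A.image (↑) ∪ A.image (fun n : ℕ ↦ -(n : ℤ)) := by
    intro x hx
    simp only [nonzeroMultiples, mem_filter, mem_Icc] at hx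
    obtain ⟨n, rfl | rfl⟩ := Int.eq_nat_or_neg x <;>
      simp_all [A, Int.natCast_dvd_natCast] <;> omega
  calc #(nonzeroMultiples H d) ≤ #A + #A :=
        (card_le_card hsub).trans <| (card_union_le _ _).trans <|
          add_le_add card_image_le card_image_le
    _ = 2 * (H / d) := by rw [Nat.Ioc_filter_dvd_card_eq_div]; ring

theorem card_nonzeroMultiples_mul_le (H d : ℕ) : #(nonzeroMultiples H d) * d ≤ 2 * H :=
  calc #(nonzeroMultiples H d) * d ≤ 2 * (H / d) * d :=
        Nat.mul_le_mul_right d (card_nonzeroMultiples_le H d)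
    _ ≤ 2 * H := by rw [mul_assoc]; exact Nat.mul_le_mul_left 2 (Nat.div_mul_le_self H d)

theorem card_piFinset_nonzeroMultiples_mul_prod_le {ι : Type*} [Fintype ι] [DecidableEq ι]
    (H : ℕ) (d : ι → ℕ) :
    #(Fintype.piFinset fun i ↦ nonzeroMultiples H (d i)) * ∏ i, d i ≤ (2 * H) ^ Fintype.card ι := by
  rw [Fintype.card_piFinset, ← prod_mul_distrib, ← Finset.card_univ, ← prod_const]
  exact prod_le_prod' fun i _ ↦ card_nonzeroMultiples_mul_le H (d i)

theorem tauNat_eq_card_finMulAntidiag (k n : ℕ) : tauNat k n = #(Nat.finMulAntidiag k n) := by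
  rw [tauNat, ← Nat.card_eq_finsetCard]
  refine Nat.card_congr (Equiv.subtypeEquivRight fun d ↦ ?_)
  rw [Nat.mem_finMulAntidiag]
  constructor
  · rintro ⟨hpos, rfl⟩
    exact ⟨rfl, prod_ne_zero_iff.mpr fun i _ ↦ (hpos i).ne'⟩
  · rintro ⟨rfl, hn⟩
    exact ⟨fun i ↦ Nat.pos_of_ne_zero (prod_ne_zero_iff.mp hn i (mem_univ i)), rfl⟩

theorem exists_mem_finMulAntidiag_forall_dvd {k y : ℕ} {h : Fin k → ℤ}
    (hdvd : (y : ℤ) ∣ ∏ i, h i) (hne : ∏ i, h i ≠ 0) :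
    ∃ d ∈ Nat.finMulAntidiag k y, ∀ i, (d i : ℤ) ∣ h i := by
  have hy : y ≠ 0 := by rintro rfl; exact hne (zero_dvd_iff.mp hdvd)
  have hdvd' : y ∣ ∏ i, (h i).natAbs :=
    map_prod Int.natAbsHom h univ ▸ Int.natAbs_dvd_natAbs.mpr hdvd
  obtain ⟨d, hprod, hd⟩ := exists_prod_eq_of_dvd_prod hdvd'
  exact ⟨d, Nat.mem_finMulAntidiag.mpr ⟨hprod, hy⟩,
    fun i ↦ Int.natCast_dvd.mpr (hd i (mem_univ i))⟩

theorem NkHy_eq_card (k H y : ℕ) :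
    NkHy k H y = #{h ∈ Fintype.piFinset fun _ : Fin k ↦ Icc (-(H : ℤ)) H |
      (y : ℤ) ∣ ∏ i, h i ∧ ∏ i, h i ≠ 0} := by
  rw [NkHy, ← Nat.card_eq_finsetCard]
  exact Nat.card_congr (Equiv.subtypeEquivRight fun h ↦ by simp)

theorem NkHy_mul_le (k H y : ℕ) : NkHy k H y * y ≤ tauNat k y * (2 * H) ^ k := by
  set F := Nat.finMulAntidiag k y
  set M : (Fin k → ℕ) → Finset (Fin k → ℤ) := fun d ↦
    Fintype.piFinset fun i ↦ nonzeroMultiples H (d i)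
  have hcover : {h ∈ Fintype.piFinset fun _ : Fin k ↦ Icc (-(H : ℤ)) H |
      (y : ℤ) ∣ ∏ i, h i ∧ ∏ i, h i ≠ 0} ⊆ F.biUnion M := by
    intro h hh
    simp only [mem_filter, Fintype.mem_piFinset] at hh
    obtain ⟨hbox, hdvd, hne⟩ := hh
    obtain ⟨d, hd, hdh⟩ := exists_mem_finMulAntidiag_forall_dvd hdvd hne
    simp only [mem_biUnion, M, Fintype.mem_piFinset, nonzeroMultiples, mem_filter]
    exact ⟨d, hd, fun i ↦ ⟨hbox i, hdh i, fun h0 ↦ hne (prod_eq_zero (mem_univ i) h0)⟩⟩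
  rw [NkHy_eq_card, tauNat_eq_card_finMulAntidiag]
  calc _ ≤ (∑ d ∈ F, #(M d)) * y :=
        Nat.mul_le_mul_right y ((card_le_card hcover).trans card_biUnion_le)
    _ = ∑ d ∈ F, #(M d) * ∏ i, d i := by
        rw [sum_mul]
        exact sum_congr rfl fun d hd ↦ by rw [Nat.prod_eq_of_mem_finMulAntidiag hd]
    _ ≤ ∑ _d ∈ F, (2 * H) ^ k := sum_le_sum fun d _ ↦ by
        simpa only [Fintype.card_fin] using card_piFinset_nonzeroMultiples_mul_prod_le H d
    _ = #F * (2 * H) ^ k := by rw [sum_const, smul_eq_mul]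

theorem abs_prod_le_pow_of_mem_Icc {ι : Type*} [Fintype ι] {H : ℤ} {h : ι → ℤ}
    (hh : ∀ i, h i ∈ Icc (-H) H) : |∏ i, h i| ≤ H ^ Fintype.card ι := by
  rw [abs_prod, ← Finset.card_univ, ← prod_const]
  exact prod_le_prod (fun i _ ↦ abs_nonneg _) fun i _ ↦ abs_le.mpr (mem_Icc.mp (hh i))

theorem NkHy_eq_zero_of_pow_lt {k H y : ℕ} (hy : H ^ k < y) : NkHy k H y = 0 := by
  refine Nat.card_eq_zero.mpr (Or.inl ⟨fun ⟨h, hbox, hdvd, hne⟩ ↦ ?_⟩)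
  have : (y : ℤ) ≤ H ^ k := calc
    (y : ℤ) ≤ |∏ i, h i| := Int.le_of_dvd (abs_pos.mpr hne) ((dvd_abs _ _).mpr hdvd)
    _ ≤ H ^ k := by simpa using abs_prod_le_pow_of_mem_Icc hbox
  exact hy.not_ge (by exact_mod_cast this)

theorem stmt5_general (k H y : ℕ) (hy : 1 ≤ y) :
    ((NkHy k H y : ℝ) ≤ (tauNat k y : ℝ) * (2 * (H : ℝ)) ^ k / (y : ℝ)) ∧
    (H ^ k < y → NkHy k H y = 0) := by
  refine ⟨?_, NkHy_eq_zero_of_pow_lt⟩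
  rw [le_div_iff₀ (by exact_mod_cast hy)]
  exact_mod_cast NkHy_mul_le k H y

/-- `N_k(H; y) ≤ τ_k(y) · (2H)^k / y`, and `N_k(H; y) = 0` if `y > H^k`. -/
theorem stmt5 (k H y : ℕ) (hk : 1 ≤ k) (hH : 1 ≤ H) (hy : 1 ≤ y) :
    ((NkHy k H y : ℝ) ≤ (tauNat k y : ℝ) * (2 * (H : ℝ)) ^ k / (y : ℝ)) ∧
    (H ^ k < y → NkHy k H y = 0) :=
  stmt5_general k H y hy
end

section
/- There exist absolute constants C > 0 and x₀ such that for all integers x ≥ x₀, H ≥ 1, and k with 1 ≤ k ≤ log log x, the set S_k(x, H) of integer tuples (h₁, h₂, …, h_k, y) ∈ ([−H, H] ∩ ℤ)^k × ((x, x+H] ∩ ℤ) with y | h₁h₂⋯h_k and h₁h₂⋯h_k ≠ 0 has size at most C · (2H)^k · H^{1 + C·k·log k / log log x} / x, where log denotes the natural logarithm. -/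
/-!
A tuple `(h, y)` is recovered from a factorisation `y = d₁⋯d_k` with `dᵢ ∣ hᵢ` together with the
quotients `hᵢ / dᵢ`, of which there are at most `∏ 2H/dᵢ ≤ (2H)^k / y < (2H)^k / x`. Hence
`x · #S_k(x, H) ≤ (2H)^k · ∑_{x < y ≤ x + H} τ_k(y)`, and it remains to show
`τ_k(y) ≤ H^(10 k log k / L)` with `L = log log x`. We may assume `x < H^k`, as otherwise no
`y > x` divides a nonzero product of `k` numbers of size at most `H`; then `log x ≤ k log H` and
`y ≤ H^(2k)`. Choose `T ≈ e^(L/4)`. The `k`-fold divisor function is at most the product over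
`p ∣ y` of `multichoose k (v_p y)`: each of the fewer than `T` primes `p < T` contributes at most
`(log₂ y + 1)^(k-1)`, and the primes `p ≥ T` together contribute at most
`k^(∑ v_p y) ≤ k^(log y / log T)`. Both factors are small powers of `H`.
-/

open Finset Real

/-- `S_k(x, H)`: the number of integer tuples `(h₁,…,h_k, y)` with each
`h_i ∈ [−H,H] ∩ ℤ`, `y ∈ (x, x+H] ∩ ℤ`, `y ∣ h₁⋯h_k` and `h₁⋯h_k ≠ 0`. -/
noncomputable def SkCount (k x H : ℕ) : ℕ :=
  Nat.card {t : (Fin k → ℤ) × ℕ //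
    (∀ i, t.1 i ∈ Finset.Icc (-(H : ℤ)) (H : ℤ)) ∧ t.2 ∈ Finset.Ioc x (x + H) ∧
      (t.2 : ℤ) ∣ ∏ i, t.1 i ∧ (∏ i, t.1 i) ≠ 0}

theorem exists_dvd_and_prod_eq_of_dvd_prod {α : Type*} [CommMonoid α] [DecompositionMonoid α]
    [Subsingleton αˣ] : ∀ {k : ℕ} (n : Fin k → α) {y : α}, y ∣ ∏ i, n i →
      ∃ d : Fin k → α, (∀ i, d i ∣ n i) ∧ ∏ i, d i = y
  | 0, _, _, h =>
    ⟨finZeroElim, finZeroElim, by simpa using (isUnit_of_dvd_one (by simpa using h)).eq_one.symm⟩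
  | _ + 1, n, _, h => by
    rw [Fin.prod_univ_succ] at h
    obtain ⟨a, b, ha, hb, rfl⟩ := exists_dvd_and_dvd_of_dvd_mul h
    obtain ⟨d, hd, rfl⟩ := exists_dvd_and_prod_eq_of_dvd_prod (Fin.tail n) hb
    exact ⟨Fin.cons a d, Fin.cases ha hd, by simp [Fin.prod_univ_succ]⟩

theorem card_filter_dvd_ne_zero_Icc_le (d H : ℕ) :
    #{h ∈ Icc (-(H : ℤ)) H | (d : ℤ) ∣ h ∧ h ≠ 0} ≤ 2 * (H / d) := by
  set q := H / d
  calc #{h ∈ Icc (-(H : ℤ)) H | (d : ℤ) ∣ h ∧ h ≠ 0}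
      ≤ #(((Icc (-(q : ℤ)) q).erase 0).image ((d : ℤ) * ·)) := by
        refine card_le_card fun h hh => ?_
        simp only [mem_filter, mem_Icc] at hh
        obtain ⟨⟨hlo, hhi⟩, ⟨m, rfl⟩, hm⟩ := hh
        have hd : 0 < d := Nat.pos_of_ne_zero fun h0 => hm (by simp [h0])
        have hmq : m.natAbs ≤ q := (Nat.le_div_iff_mul_le hd).2 (by
          rw [mul_comm, ← Int.natAbs_natCast d, ← Int.natAbs_mul]; omega)
        exact mem_image.2
          ⟨m, mem_erase.2 ⟨right_ne_zero_of_mul hm, mem_Icc.2 ⟨by omega, by omega⟩⟩, rfl⟩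
    _ ≤ #((Icc (-(q : ℤ)) q).erase 0) := card_image_le
    _ = 2 * q := by rw [card_erase_of_mem (by simp), Int.card_Icc]; omega

theorem skCount_le_sum (k x H : ℕ) :
    SkCount k x H ≤ ∑ y ∈ Ioc x (x + H), ∑ d ∈ Nat.finMulAntidiag k y, ∏ i, 2 * (H / d i) := by
  let F := (Ioc x (x + H)).biUnion fun y => (Nat.finMulAntidiag k y).biUnion fun d =>
    (Fintype.piFinset fun i => {h ∈ Icc (-(H : ℤ)) H | (d i : ℤ) ∣ h ∧ h ≠ 0}) ×ˢ {y}
  calc SkCount k x H ≤ #F := by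
        refine (Nat.card_mono F.finite_toSet ?_).trans_eq (Nat.card_eq_finsetCard F)
        rintro ⟨h, y⟩ ⟨hh, hy, hdvd, hne⟩
        have hy0 : y ≠ 0 := by have := (mem_Ioc.1 hy).1; omega
        obtain ⟨d, hd, rfl⟩ := exists_dvd_and_prod_eq_of_dvd_prod (fun i => (h i).natAbs) (y := y)
          (by simpa using (Int.natAbs_dvd_natAbs.2 hdvd).trans (map_prod Int.natAbsHom h univ).dvd)
        simp only [F, coe_biUnion, Set.mem_iUnion, coe_product, Set.mem_prod, coe_singleton,
          Set.mem_singleton_iff, mem_coe, Fintype.mem_piFinset, mem_filter]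
        exact ⟨_, hy, d, Nat.mem_finMulAntidiag.2 ⟨rfl, hy0⟩,
          fun i => ⟨hh i, Int.natCast_dvd.2 (hd i), prod_ne_zero_iff.1 hne i (mem_univ i)⟩, rfl⟩
    _ ≤ ∑ y ∈ Ioc x (x + H), ∑ d ∈ Nat.finMulAntidiag k y, ∏ i, 2 * (H / d i) := by
        refine card_biUnion_le.trans (sum_le_sum fun y _ => card_biUnion_le.trans
          (sum_le_sum fun d _ => ?_))
        rw [card_product, card_singleton, mul_one, Fintype.card_piFinset]
        exact prod_le_prod' fun i _ => card_filter_dvd_ne_zero_Icc_le (d i) H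

theorem skCount_eq_zero_of_pow_le {k x H : ℕ} (h : H ^ k ≤ x) : SkCount k x H = 0 := by
  refine Nat.eq_zero_of_le_zero ((skCount_le_sum k x H).trans_eq
    (sum_eq_zero fun y hy => sum_eq_zero fun d hd => ?_))
  obtain ⟨i, hi⟩ : ∃ i, H < d i := by
    by_contra! hle
    have hyH : y ≤ H ^ k := Nat.prod_eq_of_mem_finMulAntidiag hd ▸
      (prod_le_pow_card _ _ _ fun i _ => hle i).trans_eq (by simp)
    have := (mem_Ioc.1 hy).1
    omega
  exact prod_eq_zero (mem_univ i) (by rw [Nat.div_eq_of_lt hi, mul_zero])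

theorem prod_two_mul_div_mul_prod_le {k : ℕ} (H : ℕ) (d : Fin k → ℕ) :
    (∏ i, 2 * (H / d i)) * ∏ i, d i ≤ (2 * H) ^ k := by
  rw [← prod_mul_distrib]
  calc ∏ i, 2 * (H / d i) * d i ≤ ∏ _i : Fin k, 2 * H :=
        prod_le_prod' fun i _ => by
          rw [mul_assoc]; exact Nat.mul_le_mul_left 2 (Nat.div_mul_le_self H (d i))
    _ = (2 * H) ^ k := by simp

theorem skCount_mul_le (k x H : ℕ) :
    SkCount k x H * x ≤ (2 * H) ^ k * ∑ y ∈ Ioc x (x + H), #(Nat.finMulAntidiag k y) := by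
  calc SkCount k x H * x
      ≤ ∑ y ∈ Ioc x (x + H), ∑ d ∈ Nat.finMulAntidiag k y, (∏ i, 2 * (H / d i)) * x := by
        simp only [← sum_mul]; exact Nat.mul_le_mul_right x (skCount_le_sum k x H)
    _ ≤ ∑ y ∈ Ioc x (x + H), ∑ d ∈ Nat.finMulAntidiag k y, (2 * H) ^ k := by
        refine sum_le_sum fun y hy => sum_le_sum fun d hd => ?_
        refine (Nat.mul_le_mul_left _ ?_).trans (prod_two_mul_div_mul_prod_le H d)
        rw [Nat.prod_eq_of_mem_finMulAntidiag hd]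
        exact (mem_Ioc.1 hy).1.le
    _ = (2 * H) ^ k * ∑ y ∈ Ioc x (x + H), #(Nat.finMulAntidiag k y) := by
        simp [mul_sum, mul_comm]

theorem Sym.card_sym_le_pow (α : Type*) [Fintype α] [DecidableEq α] (n : ℕ) :
    Fintype.card (Sym α n) ≤ Fintype.card α ^ n :=
  (Fintype.card_le_of_surjective (Sym.symEquivSym'.symm ∘ Quotient.mk _)
    (Sym.symEquivSym'.symm.surjective.comp Quotient.mk_surjective)).trans_eq (card_vector n)

theorem Nat.multichoose_le_pow (k n : ℕ) : k.multichoose n ≤ k ^ n := by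
  simpa [Sym.card_sym_fin_eq_multichoose] using Sym.card_sym_le_pow (Fin k) n

theorem Nat.multichoose_le_succ_pow (k n : ℕ) : k.multichoose n ≤ (n + 1) ^ (k - 1) := by
  rcases k with _ | k
  · cases n <;> simp
  · calc (k + 1).multichoose n = (n + 1).multichoose k := by
          rw [Nat.multichoose_eq, Nat.multichoose_eq, add_right_comm, add_tsub_cancel_right,
            add_right_comm, add_tsub_cancel_right, add_comm, Nat.choose_symm_add]
      _ ≤ (n + 1) ^ k := Nat.multichoose_le_pow _ _

theorem Finset.Nat.card_antidiagonalTuple (k n : ℕ) :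
    #(Finset.Nat.antidiagonalTuple k n) = k.multichoose n := by
  rw [← piAntidiag_univ_fin_eq_antidiagonalTuple, ← map_sym_eq_piAntidiag, card_map, sym_univ,
    card_univ, Sym.card_sym_fin_eq_multichoose]

theorem Nat.card_finMulAntidiag_le_prod_multichoose (k y : ℕ) :
    #(finMulAntidiag k y) ≤ ∏ p ∈ y.primeFactors, k.multichoose (y.factorization p) := by
  refine (card_le_card_of_injOn
    (t := y.primeFactors.pi fun p => Finset.Nat.antidiagonalTuple k (y.factorization p))
    (fun f p _ i => (f i).factorization p) (fun f hf => ?_) (fun f hf g hg hfg => ?_)).trans_eq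
    (by simp [Finset.Nat.card_antidiagonalTuple])
  · have hf0 := ne_zero_of_mem_finMulAntidiag hf
    refine mem_pi.2 fun p _ => Finset.Nat.mem_antidiagonalTuple.2 ?_
    simp only [← Finset.sum_apply', ← Nat.factorization_prod fun i _ => hf0 i,
      prod_eq_of_mem_finMulAntidiag hf]
  · funext i
    refine Nat.eq_of_factorization_eq (ne_zero_of_mem_finMulAntidiag hf i)
      (ne_zero_of_mem_finMulAntidiag hg i) fun p => ?_
    by_cases hp : p ∈ y.primeFactors
    · exact congrFun (congrFun (congrFun hfg p) hp) i
    · have hzero : ∀ g ∈ finMulAntidiag k y, (g i).factorization p = 0 := fun g hg =>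
        Finsupp.notMem_support_iff.1 fun h => hp <| Nat.primeFactors_mono
          (dvd_of_mem_finMulAntidiag hg i) (mem_finMulAntidiag.1 hg).2
          (by rwa [Nat.support_factorization] at h)
      rw [hzero f hf, hzero g hg]

theorem Nat.card_finMulAntidiag_le (k y T : ℕ) (hk : k ≠ 0) (hT : 1 < T) :
    #(finMulAntidiag k y) ≤ (Nat.log 2 y + 1) ^ ((k - 1) * T) * k ^ Nat.log T y := by
  rcases eq_or_ne y 0 with rfl | hy
  · simp
  set a := y.factorization
  have ha : ∀ p ∈ y.primeFactors, p ^ a p ≤ y := fun p _ =>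
    Nat.le_of_dvd (Nat.pos_of_ne_zero hy) (Nat.ordProj_dvd y p)
  have hsmall : #{p ∈ y.primeFactors | p < T} ≤ T :=
    (card_le_card fun p hp => mem_range.2 (mem_filter.1 hp).2).trans_eq (card_range T)
  have hlarge : ∑ p ∈ y.primeFactors with ¬p < T, a p ≤ Nat.log T y := by
    refine Nat.le_log_of_pow_le hT ?_
    calc T ^ ∑ p ∈ y.primeFactors with ¬p < T, a p = ∏ p ∈ y.primeFactors with ¬p < T, T ^ a p :=
          (prod_pow_eq_pow_sum _ _ _).symm
      _ ≤ ∏ p ∈ y.primeFactors with ¬p < T, p ^ a p := by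
          gcongr with p hp; exact not_lt.1 (mem_filter.1 hp).2
      _ ≤ ∏ p ∈ y.primeFactors, p ^ a p := prod_le_prod_of_subset_of_one_le' (filter_subset _ _)
            fun p hp _ => Nat.one_le_pow _ _ (Nat.prime_of_mem_primeFactors hp).pos
      _ = y := (Nat.prod_primeFactors_pow_factorization hy).symm
  calc #(finMulAntidiag k y) ≤ ∏ p ∈ y.primeFactors, k.multichoose (a p) :=
        Nat.card_finMulAntidiag_le_prod_multichoose k y
    _ = (∏ p ∈ y.primeFactors with p < T, k.multichoose (a p)) *
          ∏ p ∈ y.primeFactors with ¬p < T, k.multichoose (a p) :=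
        (prod_filter_mul_prod_filter_not _ _ _).symm
    _ ≤ (∏ p ∈ y.primeFactors with p < T, (Nat.log 2 y + 1) ^ (k - 1)) *
          ∏ p ∈ y.primeFactors with ¬p < T, k ^ a p := by
        gcongr with p hp p hp
        · refine (Nat.multichoose_le_succ_pow k (a p)).trans (Nat.pow_le_pow_left ?_ _)
          have hp' := (mem_filter.1 hp).1
          exact Nat.succ_le_succ (Nat.le_log_of_pow_le one_lt_two
            ((Nat.pow_le_pow_left (Nat.prime_of_mem_primeFactors hp').two_le _).trans (ha p hp')))
        · exact Nat.multichoose_le_pow k (a p)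
    _ ≤ (Nat.log 2 y + 1) ^ ((k - 1) * T) * k ^ Nat.log T y := by
        rw [prod_const, prod_pow_eq_pow_sum, ← pow_mul]
        gcongr
        all_goals omega

theorem four_mul_cube_le_exp {L : ℝ} (hL : 400 ≤ L) : 4 * L ^ 3 ≤ exp (3 * L / 4) := by
  have h := pow_div_factorial_le_exp (x := 3 * L / 4) (by positivity) 4
  norm_num [Nat.factorial] at h
  nlinarith [pow_nonneg (by linarith : (0:ℝ) ≤ L) 3]

theorem sq_mul_exp_mul_log_le {L w : ℝ} (hL : 400 ≤ L) (hw : exp L ≤ w) :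
    L ^ 2 * exp (L / 4) * log (6 * w) ≤ w := by
  have hw0 : 0 < w := (exp_pos L).trans_le hw
  have hexp : exp L = exp (L / 4) * exp (3 * L / 4) := by rw [← exp_add]; ring_nf
  have hcube := four_mul_cube_le_exp hL
  have hlog : log (6 * w) ≤ 2 * L + w / exp L := by
    have h6 : log 6 ≤ 5 := by linarith [log_le_sub_one_of_pos (by norm_num : (0:ℝ) < 6)]
    have hwL := log_le_sub_one_of_pos (div_pos hw0 (exp_pos L))
    rw [log_div hw0.ne' (exp_pos L).ne', log_exp] at hwL
    rw [log_mul (by norm_num) hw0.ne']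
    linarith
  calc L ^ 2 * exp (L / 4) * log (6 * w) ≤ L ^ 2 * exp (L / 4) * (2 * L + w / exp L) := by
        gcongr
    _ = 2 * L ^ 3 * exp (L / 4) + L ^ 2 / exp (3 * L / 4) * w := by
        rw [hexp]; field_simp
    _ ≤ exp L / 2 + 1 / 2 * w := by
        have h1 : 2 * L ^ 3 * exp (L / 4) ≤ exp L / 2 := by rw [hexp]; nlinarith [exp_pos (L / 4)]
        have h2 : L ^ 2 / exp (3 * L / 4) ≤ 1 / 2 := by
          rw [div_le_iff₀ (exp_pos _)]; nlinarith
        nlinarith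
    _ ≤ w := by linarith

theorem divisor_exponent_le {k : ℕ} {L u ℓ T : ℝ} (hL : 400 ≤ L) (hk : 1 ≤ k) (hkL : k ≤ L)
    (hu : exp L ≤ k * u) (hℓ : 1 ≤ ℓ) (hℓu : ℓ ≤ 2 * k * u) (hT : exp (L / 4) ≤ T)
    (hT' : T ≤ 2 * exp (L / 4)) :
    (k - 1) * T * log (3 * ℓ) + ℓ / log T * log k ≤ 10 * k * log k / L * u := by
  have hk0 : (0 : ℝ) < k := by exact_mod_cast hk
  have hL0 : 0 < L := by linarith
  have hu0 : 0 < u := pos_of_mul_pos_right ((exp_pos L).trans_le hu) hk0.le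
  have hk1 : (k : ℝ) - 1 ≤ k * log k := by
    have := one_sub_inv_le_log_of_pos hk0
    rwa [← mul_le_mul_iff_of_pos_left hk0, mul_sub, mul_one, mul_inv_cancel₀ hk0.ne'] at this
  have hlogT : L / 4 ≤ log T := (le_log_iff_exp_le ((exp_pos _).trans_le hT)).2 hT
  have hsmall : T * log (3 * ℓ) ≤ 2 * u / L := by
    have h := sq_mul_exp_mul_log_le hL (w := L * u) (hu.trans (by gcongr))
    have h3 : log (3 * ℓ) ≤ log (6 * (L * u)) := log_le_log (by linarith) (by nlinarith)
    rw [le_div_iff₀ hL0]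
    calc T * log (3 * ℓ) * L ≤ 2 * exp (L / 4) * log (6 * (L * u)) * L := by
          gcongr
          · exact log_nonneg (by linarith)
      _ = 2 * (L ^ 2 * exp (L / 4) * log (6 * (L * u))) / L := by field_simp
      _ ≤ 2 * (L * u) / L := by gcongr
      _ = 2 * u := by field_simp
  have hlarge : ℓ / log T ≤ 8 * k * u / L := by
    calc ℓ / log T ≤ ℓ / (L / 4) := by gcongr
      _ = 4 * ℓ / L := by ring
      _ ≤ 8 * k * u / L := div_le_div_of_nonneg_right (by linarith) hL0.le
  have hlogk : 0 ≤ log k := log_nonneg (by exact_mod_cast hk)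
  calc (k - 1) * T * log (3 * ℓ) + ℓ / log T * log k
      = (k - 1) * (T * log (3 * ℓ)) + ℓ / log T * log k := by ring
    _ ≤ k * log k * (2 * u / L) + 8 * k * u / L * log k :=
        add_le_add (mul_le_mul hk1 hsmall
          (mul_nonneg ((exp_pos _).le.trans hT) (log_nonneg (by linarith))) (by positivity))
          (mul_le_mul_of_nonneg_right hlarge hlogk)
    _ = 10 * k * log k / L * u := by ring

theorem card_finMulAntidiag_le_exp {k y T : ℕ} (hk : 1 ≤ k) (hT : 1 < T) (hy : 1 ≤ log y) :
    (#(Nat.finMulAntidiag k y) : ℝ) ≤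
      exp ((k - 1) * T * log (3 * log y) + log y / log T * log k) := by
  have hlog2 : (Nat.log 2 y : ℝ) + 1 ≤ 3 * log y := by
    have h := natLog_le_logb y 2
    rw [logb, Nat.cast_ofNat, le_div_iff₀ (log_pos one_lt_two)] at h
    nlinarith [log_two_gt_d9]
  have hlogT : (Nat.log T y : ℝ) ≤ log y / log T := by
    simpa only [logb] using natLog_le_logb y T
  have hk1 : (1 : ℝ) ≤ k := by exact_mod_cast hk
  calc (#(Nat.finMulAntidiag k y) : ℝ)
      ≤ ((Nat.log 2 y : ℝ) + 1) ^ ((k - 1) * T) * (k : ℝ) ^ Nat.log T y := by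
        exact_mod_cast Nat.card_finMulAntidiag_le k y T (by omega) hT
    _ ≤ (3 * log y) ^ ((k - 1) * T) * (k : ℝ) ^ (log y / log T) := by
        rw [← rpow_natCast (k : ℝ)]
        gcongr
    _ = exp ((k - 1) * T * log (3 * log y) + log y / log T * log k) := by
        rw [exp_add, ← exp_log (by linarith : 0 < 3 * log y), ← exp_nat_mul, log_exp,
          rpow_def_of_pos (by linarith), mul_comm (log k)]
        push_cast [Nat.cast_sub hk]
        ring_nf

theorem card_finMulAntidiag_le_rpow {k x H y : ℕ} (hk : 1 ≤ k) (hx : exp (exp 400) ≤ x)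
    (hkL : k ≤ log (log x)) (hxH : x < H ^ k) (hxy : x < y) (hyx : y ≤ x + H) :
    (#(Nat.finMulAntidiag k y) : ℝ) ≤ (H : ℝ) ^ (10 * k * log k / log (log x)) := by
  set L := log (log x)
  have hlogx : exp 400 ≤ log x := (le_log_iff_exp_le ((exp_pos _).trans_le hx)).2 hx
  have hL : 400 ≤ L := (le_log_iff_exp_le ((exp_pos _).trans_le hlogx)).2 hlogx
  have hlogx1 : 1 ≤ log x := (one_le_exp (by norm_num)).trans hlogx
  have hx1 : (1 : ℝ) < x := (one_lt_exp_iff.2 (exp_pos 400)).trans_le hx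
  have hH : 2 ≤ H := by
    by_contra! h
    have : H ^ k ≤ 1 := pow_le_one₀ (Nat.zero_le _) (by omega)
    have : (x : ℝ) < 1 := by exact_mod_cast (by omega : x < 1)
    linarith
  have hu : exp L ≤ k * log H := by
    rw [exp_log (by linarith), ← log_pow]
    exact log_le_log (by linarith) (by exact_mod_cast hxH.le)
  have hℓ : log x ≤ log y := log_le_log (by linarith) (by exact_mod_cast hxy.le)
  have hy : y ≤ H ^ (2 * k) := by
    have h1 : H ≤ H ^ k := Nat.le_self_pow (by omega) H
    have h2 : 2 * H ^ k ≤ H ^ (k + 1) := by rw [pow_succ']; exact Nat.mul_le_mul_right _ hH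
    have h3 : H ^ (k + 1) ≤ H ^ (2 * k) := Nat.pow_le_pow_right (by omega) (by omega)
    omega
  have hℓu : log y ≤ 2 * k * log H := by
    have h := log_le_log (by exact_mod_cast (by omega : 0 < y)) (Nat.cast_le (α := ℝ).2 hy)
    rw [Nat.cast_pow, log_pow] at h
    push_cast at h
    linarith
  set T := ⌈exp (L / 4)⌉₊
  have hT : exp (L / 4) ≤ T := Nat.le_ceil _
  have hT' : (T : ℝ) ≤ 2 * exp (L / 4) := by
    linarith [Nat.ceil_lt_add_one (exp_pos (L / 4)).le, one_le_exp (by linarith : 0 ≤ L / 4)]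
  have hT1 : 1 < T := Nat.lt_ceil.2 (by norm_num; linarith)
  calc (#(Nat.finMulAntidiag k y) : ℝ)
      ≤ exp ((k - 1) * T * log (3 * log y) + log y / log T * log k) :=
        card_finMulAntidiag_le_exp hk hT1 (hlogx1.trans hℓ)
    _ ≤ exp (10 * k * log k / L * log H) :=
        exp_le_exp.2 (divisor_exponent_le hL hk hkL hu (hlogx1.trans hℓ) hℓu hT hT')
    _ = (H : ℝ) ^ (10 * k * log k / L) := by
        rw [rpow_def_of_pos (by positivity), mul_comm]

/-- there are absolute constants `C > 0` and `x₀` such that for all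
integers `x ≥ x₀`, `H ≥ 1` and `1 ≤ k ≤ log log x`, one has
`#S_k(x, H) ≤ C · (2H)^k · H^{1 + C·k·log k / log log x} / x`. -/
theorem stmt6 :
    ∃ C : ℝ, 0 < C ∧ ∃ x₀ : ℕ, ∀ x H k : ℕ, x₀ ≤ x → 1 ≤ H → 1 ≤ k →
      (k : ℝ) ≤ Real.log (Real.log x) →
      (SkCount k x H : ℝ) ≤
        C * (2 * (H : ℝ)) ^ k *
          (H : ℝ) ^ ((1 : ℝ) + C * (k : ℝ) * Real.log k / Real.log (Real.log x)) / (x : ℝ) := by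
  refine ⟨10, by norm_num, ⌈exp (exp 400)⌉₊, fun x H k hx _ hk hkL => ?_⟩
  have hx' : exp (exp 400) ≤ x := Nat.ceil_le.1 hx
  rcases le_or_gt (H ^ k) x with hle | hlt
  · rw [skCount_eq_zero_of_pow_le hle, Nat.cast_zero]
    positivity
  set ε := 10 * (k : ℝ) * log k / log (log x)
  have hH : (0 : ℝ) < H := Nat.cast_pos.2 (Nat.pos_of_ne_zero (by rintro rfl; simp_all))
  have hsum : ∑ y ∈ Ioc x (x + H), (#(Nat.finMulAntidiag k y) : ℝ) ≤ H * (H : ℝ) ^ ε :=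
    (sum_le_sum fun y hy => card_finMulAntidiag_le_rpow hk hx' hkL hlt
      (mem_Ioc.1 hy).1 (mem_Ioc.1 hy).2).trans_eq
      (by rw [sum_const, Nat.card_Ioc, add_tsub_cancel_left, nsmul_eq_mul])
  rw [le_div_iff₀ ((exp_pos _).trans_le hx'), rpow_add hH, rpow_one]
  calc (SkCount k x H : ℝ) * x
      ≤ (2 * H) ^ k * ∑ y ∈ Ioc x (x + H), (#(Nat.finMulAntidiag k y) : ℝ) := by
        exact_mod_cast skCount_mul_le k x H
    _ ≤ (2 * H) ^ k * (H * (H : ℝ) ^ ε) := by gcongr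
    _ ≤ 10 * (2 * H) ^ k * (H * (H : ℝ) ^ ε) := by
        have : 0 ≤ (2 * (H : ℝ)) ^ k * (H * (H : ℝ) ^ ε) := by positivity
        linarith
end
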